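/- arXiv:2211.13609 — 2 statements merged into one kernel-verified Lean document; each statement's English description precedes it below -/
import Mathlib

section
/- McAllester PAC-Bayes bound: Let P be a prior probability measure on a hypothesis space H, ℓ the 0-1 loss, and 𝒟 a distribution on labeled examples. For any δ ∈ (0,1) and any n ≥ 1, with probability at least 1−δ over an i.i.d. sample of size n from 𝒟, simultaneously for every posterior probability measure Q on H: E_{h∼Q}[R(h)] ≤ E_{h∼Q}[R̂(h)] + sqrt((KL(Q‖P) + log(n/δ) + 2) / (2n − 1)). -/
/-!
For a fixed hypothesis `h` the number of errors on the sample takes one of `n + 1` values `k`,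
each with probability at most `exp (-2n (k/n - R h)²)` by Hoeffding's inequality. The factor
`2n - 1` is chosen so that this beats `exp ((2n - 1) (R h - R̂ h)²)`, whence
`E_s exp ((2n - 1) (R h - R̂ h)²) ≤ n + 1 ≤ e² n`. By Fubini and Markov's inequality, outside an
event of probability `δ` the prior average of `exp ((2n - 1) (R - R̂)²)` is at most `e² n / δ`.
On the complement, the Donsker–Varadhan change of measure bounds `(2n - 1) E_Q (R - R̂)²` by
`KL(Q ‖ P) + log (e² n / δ)` simultaneously for all posteriors `Q`, and Jensen's inequality
`(E_Q Δ)² ≤ E_Q Δ²` finishes the proof.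
-/

open MeasureTheory Real
open scoped Classical

/-- The Kullback–Leibler divergence `KL(μ ‖ ν)` between two measures, as an extended real:
it is `∫ log (dμ/dν) dμ` when `μ ≪ ν` and the integrand is integrable, and `+∞` otherwise. -/
noncomputable def klDiv {α : Type*} [MeasurableSpace α] (μ ν : Measure α) : EReal :=
  if μ ≪ ν ∧ Integrable (fun x => Real.log (μ.rnDeriv ν x).toReal) μ then
    ((∫ x, Real.log (μ.rnDeriv ν x).toReal ∂μ : ℝ) : EReal)
  else ⊤

open ProbabilityTheory

section KullbackLeibler

variable {H : Type*} [MeasurableSpace H] {P Q : Measure H}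

lemma klDiv_ne_top_iff : klDiv Q P ≠ ⊤ ↔ Q ≪ P ∧ Integrable (llr Q P) Q := by
  unfold klDiv llr
  split_ifs with h <;> simp [h]

lemma toReal_klDiv_of_ne_top (h : klDiv Q P ≠ ⊤) :
    (klDiv Q P).toReal = ∫ h, llr Q P h ∂Q := by
  have h' := klDiv_ne_top_iff.1 h
  unfold klDiv llr at *
  rw [if_pos h', EReal.toReal_coe]

/-- **Donsker–Varadhan** change of measure: `KL(Q ‖ P) - KL(Q ‖ P_f) = ∫ f dQ - log ∫ exp f dP`,
where `P_f` is `P` tilted by `f`, and the second divergence is nonnegative. -/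
theorem integral_le_toReal_klDiv_add_log_integral_exp
    [IsProbabilityMeasure P] [IsProbabilityMeasure Q] {f : H → ℝ} (hKL : klDiv Q P ≠ ⊤)
    (hfQ : Integrable f Q) (hfP : Integrable (fun h => exp (f h)) P) :
    ∫ h, f h ∂Q ≤ (klDiv Q P).toReal + log (∫ h, exp (f h) ∂P) := by
  obtain ⟨hQP, hllr⟩ := klDiv_ne_top_iff.1 hKL
  have : IsProbabilityMeasure (P.tilted f) := isProbabilityMeasure_tilted hfP
  have hQPf : Q ≪ P.tilted f := hQP.trans (absolutelyContinuous_tilted hfP)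
  have gibbs := InformationTheory.integral_llr_add_sub_measure_univ_nonneg hQPf
    (integrable_llr_tilted_right hQP hfQ hllr hfP)
  rw [integral_llr_tilted_right hQP hfQ hfP hllr] at gibbs
  simp only [probReal_univ] at gibbs
  rw [toReal_klDiv_of_ne_top hKL]
  linarith

lemma sq_integral_le_integral_sq [IsProbabilityMeasure Q] {Φ : H → ℝ} (hΦ : MemLp Φ 2 Q) :
    (∫ h, Φ h ∂Q) ^ 2 ≤ ∫ h, Φ h ^ 2 ∂Q := by
  have := variance_nonneg Φ Q
  rw [variance_eq_sub hΦ] at this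
  simpa only [Pi.pow_apply, sub_nonneg] using this

theorem integral_le_sqrt_toReal_klDiv_add_log_integral_exp_sq
    [IsProbabilityMeasure P] [IsProbabilityMeasure Q] (hKL : klDiv Q P ≠ ⊤)
    {Φ : H → ℝ} (hΦ : Measurable Φ) {C : ℝ} (hΦC : ∀ h, |Φ h| ≤ C) {t : ℝ} (ht : 0 < t) :
    ∫ h, Φ h ∂Q ≤ √(((klDiv Q P).toReal + log (∫ h, exp (t * Φ h ^ 2) ∂P)) / t) := by
  have hΦQ : MemLp Φ 2 Q := .of_bound hΦ.aestronglyMeasurable C (ae_of_all _ hΦC)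
  have hsqC : ∀ h, ‖t * Φ h ^ 2‖ ≤ t * C ^ 2 := fun h => by
    rw [norm_mul, norm_pow, Real.norm_of_nonneg ht.le, Real.norm_eq_abs]
    gcongr
    exact hΦC h
  have hexpC : ∀ h, ‖exp (t * Φ h ^ 2)‖ ≤ exp (t * C ^ 2) := fun h => by
    rw [Real.norm_of_nonneg (exp_nonneg _)]
    exact exp_le_exp.2 ((Real.le_norm_self _).trans (hsqC h))
  have hDV := integral_le_toReal_klDiv_add_log_integral_exp hKL
    (.of_bound (by fun_prop) _ (ae_of_all _ hsqC))
    (.of_bound (by fun_prop) _ (ae_of_all _ hexpC))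
  rw [integral_const_mul] at hDV
  refine Real.le_sqrt_of_sq_le ?_
  rw [le_div_iff₀ ht]
  nlinarith [sq_integral_le_integral_sq hΦQ]

end KullbackLeibler

section Hoeffding

variable {Ω : Type*} [MeasurableSpace Ω] {μ : Measure Ω}

lemma ProbabilityTheory.HasSubgaussianMGF.measureReal_eq_le [IsFiniteMeasure μ] {X : Ω → ℝ}
    {c : NNReal} (hX : HasSubgaussianMGF X c μ) (t : ℝ) :
    μ.real {ω | X ω = t} ≤ exp (-t ^ 2 / (2 * c)) := by
  rcases le_total 0 t with ht | ht
  · exact (measureReal_mono fun ω hω => le_of_eq (Eq.symm hω)).trans (hX.measure_ge_le ht)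
  · refine (measureReal_mono fun ω (hω : X ω = t) => ?_).trans
      (neg_sq t ▸ hX.neg.measure_ge_le (neg_nonneg.2 ht))
    exact show -t ≤ -X ω by rw [hω]

lemma integral_comp_eq_sum_of_mem_finset [IsFiniteMeasure μ] {S : Ω → ℝ} (hS : Measurable S)
    {T : Finset ℝ} (hST : ∀ ω, S ω ∈ T) (g : ℝ → ℝ) :
    ∫ ω, g (S ω) ∂μ = ∑ t ∈ T, μ.real {ω | S ω = t} * g t := by
  have hdecomp :
      (fun ω => g (S ω)) = fun ω => ∑ t ∈ T, {ω | S ω = t}.indicator (fun _ => g t) ω := by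
    funext ω
    rw [Finset.sum_eq_single_of_mem (S ω) (hST ω) fun t _ ht => ?_]
    · simp
    · simp [Set.indicator, Ne.symm ht]
  have hmeas (t : ℝ) : MeasurableSet {ω | S ω = t} := hS (measurableSet_singleton t)
  rw [hdecomp, integral_finsetSum _ fun t _ => (integrable_const _).indicator (hmeas t)]
  simp only [integral_indicator_const _ (hmeas _), smul_eq_mul]

variable {Z : Type*} [MeasurableSpace Z] (𝒟 : Measure Z) [IsProbabilityMeasure 𝒟]

theorem measureReal_pi_sum_eq_le {X : Z → ℝ} (hX : Measurable X)
    (hX01 : ∀ z, X z ∈ Set.Icc 0 1) (n : ℕ) (t : ℝ) :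
    (Measure.pi fun _ : Fin n => 𝒟).real {s | ∑ i, X (s i) = t} ≤
      exp (-2 * (t - n * ∫ z, X z ∂𝒟) ^ 2 / n) := by
  set p := ∫ z, X z ∂𝒟
  have hsub (i : Fin n) : HasSubgaussianMGF (fun s : Fin n → Z => X (s i) - p)
      ((‖(1 : ℝ) - 0‖₊ / 2) ^ 2) (Measure.pi fun _ => 𝒟) := by
    refine HasSubgaussianMGF.of_map (X := fun z => X z - p) (measurable_pi_apply i).aemeasurable ?_
    rw [(measurePreserving_eval (fun _ => 𝒟) i).map_eq]
    exact hasSubgaussianMGF_of_mem_Icc hX.aemeasurable (ae_of_all _ hX01)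
  have hindep : iIndepFun (fun i (s : Fin n → Z) => X (s i) - p) (Measure.pi fun _ => 𝒟) :=
    iIndepFun_pi (X := fun _ z => X z - p) fun _ => (hX.sub_const p).aemeasurable
  have := (HasSubgaussianMGF.sum_of_iIndepFun hindep (s := Finset.univ) fun i _ => hsub i)
    |>.measureReal_eq_le (t - n * p)
  have hc : ((∑ _ : Fin n, (‖(1 : ℝ) - 0‖₊ / 2) ^ 2 : NNReal) : ℝ) = n / 4 := by
    norm_num [div_eq_mul_inv]
  rw [hc] at this
  convert this using 2
  · simp [Finset.sum_sub_distrib, eq_sub_iff_add_eq]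
  · ring

lemma sum_mem_image_natCast_range {ι : Type*} [Fintype ι] {x : ι → ℝ}
    (hx : ∀ i, x i = 0 ∨ x i = 1) :
    ∑ i, x i ∈ (Finset.range (Fintype.card ι + 1)).image (Nat.cast : ℕ → ℝ) := by
  refine Finset.mem_image.2 ⟨(Finset.univ.filter fun i => x i = 1).card,
    Finset.mem_range_succ_iff.2 (Finset.card_filter_le _ _), ?_⟩
  rw [Finset.natCast_card_filter]
  refine Finset.sum_congr rfl fun i _ => ?_
  rcases hx i with h | h <;> simp [h]

theorem integral_pi_exp_mul_sq_integral_sub_mean_le {X : Z → ℝ} (hX : Measurable X)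
    (hX01 : ∀ z, X z = 0 ∨ X z = 1) (n : ℕ) :
    ∫ s, exp ((2 * n - 1) * ((∫ z, X z ∂𝒟) - 1 / n * ∑ i, X (s i)) ^ 2)
      ∂(Measure.pi fun _ : Fin n => 𝒟) ≤ n + 1 := by
  set p := ∫ z, X z ∂𝒟
  have hS : Measurable fun s : Fin n → Z => ∑ i, X (s i) := by fun_prop
  have hIcc (z : Z) : X z ∈ Set.Icc 0 1 := by rcases hX01 z with h | h <;> simp [h]
  have hscale (t : ℝ) : (t - n * p) ^ 2 / n = n * (p - 1 / n * t) ^ 2 := by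
    rcases eq_or_ne (n : ℝ) 0 with hn | hn
    · simp [hn]
    · field_simp
      ring
  calc _ = ∑ t ∈ (Finset.range (n + 1)).image (Nat.cast : ℕ → ℝ),
        (Measure.pi fun _ : Fin n => 𝒟).real {s | ∑ i, X (s i) = t} *
          exp ((2 * n - 1) * (p - 1 / n * t) ^ 2) :=
        integral_comp_eq_sum_of_mem_finset hS
          (fun s => by simpa using sum_mem_image_natCast_range fun i => hX01 (s i)) _
    _ ≤ ∑ t ∈ (Finset.range (n + 1)).image (Nat.cast : ℕ → ℝ), 1 := by
        refine Finset.sum_le_sum fun t _ => ?_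
        calc _ ≤ exp (-2 * (t - n * p) ^ 2 / n) * exp ((2 * n - 1) * (p - 1 / n * t) ^ 2) := by
              gcongr
              exact measureReal_pi_sum_eq_le 𝒟 hX hIcc n t
          _ = exp (-(p - 1 / n * t) ^ 2) := by
              rw [← exp_add, mul_div_assoc, hscale]
              ring_nf
          _ ≤ 1 := exp_le_one_iff.2 (neg_nonpos.2 (sq_nonneg _))
    _ ≤ n + 1 := by
        simpa using (Nat.cast_le (α := ℝ)).2
          (Finset.card_image_le (s := Finset.range (n + 1)) (f := (Nat.cast : ℕ → ℝ)))

end Hoeffding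

section PACBayes

variable {H S : Type*} [MeasurableSpace H] [MeasurableSpace S] (P : Measure H) (μ : Measure S)

lemma mul_measureReal_le_of_forall_integral_le [IsProbabilityMeasure P] [IsFiniteMeasure μ]
    {ψ : H × S → ℝ} (hψ : Measurable ψ)
    (hψ0 : ∀ q, 0 ≤ ψ q) {C : ℝ} (hψC : ∀ q, ψ q ≤ C) {M : ℝ} (hM : ∀ h, ∫ s, ψ (h, s) ∂μ ≤ M)
    (ε : ℝ) : ε * μ.real {s | ε ≤ ∫ h, ψ (h, s) ∂P} ≤ M := by
  have hψ_int : Integrable ψ (P.prod μ) := .of_bound hψ.aestronglyMeasurable C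
    (ae_of_all _ fun q => (Real.norm_of_nonneg (hψ0 q)).trans_le (hψC q))
  refine (mul_meas_ge_le_integral_of_nonneg (ae_of_all _ fun s => integral_nonneg fun h => hψ0 _)
    hψ_int.integral_prod_right ε).trans ?_
  rw [← integral_integral_swap (f := fun h s => ψ (h, s)) hψ_int]
  calc ∫ h, ∫ s, ψ (h, s) ∂μ ∂P ≤ ∫ _, M ∂P :=
        integral_mono_of_nonneg (ae_of_all _ fun h => integral_nonneg fun s => hψ0 _)
          (integrable_const M) (ae_of_all _ hM)
    _ = M := by simp

variable [IsProbabilityMeasure P] [IsProbabilityMeasure μ]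

theorem pac_bayes_of_integral_exp_mul_sq_le {Φ : H → S → ℝ} (hΦ : Measurable (Function.uncurry Φ))
    {C : ℝ} (hΦC : ∀ h s, |Φ h s| ≤ C) {t : ℝ} (ht : 0 < t) {M : ℝ}
    (hM : ∀ h, ∫ s, exp (t * Φ h s ^ 2) ∂μ ≤ M) {δ : ℝ} (hδ : 0 < δ) :
    ENNReal.ofReal (1 - δ) ≤ μ {s | ∀ Q : Measure H, IsProbabilityMeasure Q → klDiv Q P ≠ ⊤ →
      ∫ h, Φ h s ∂Q ≤ √(((klDiv Q P).toReal + log (M / δ)) / t)} := by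
  set F : S → ℝ := fun s => ∫ h, exp (t * Φ h s ^ 2) ∂P
  have hexp_le (h : H) (s : S) : exp (t * Φ h s ^ 2) ≤ exp (t * C ^ 2) := by
    have := abs_le.1 (hΦC h s)
    exact exp_le_exp.2 (mul_le_mul_of_nonneg_left (sq_le_sq' this.1 this.2) ht.le)
  have hexp_norm (h : H) (s : S) : ‖exp (t * Φ h s ^ 2)‖ ≤ exp (t * C ^ 2) :=
    (Real.norm_of_nonneg (exp_nonneg _)).trans_le (hexp_le h s)
  have hF_pos (s : S) : 0 < F s :=
    integral_exp_pos (.of_bound (by fun_prop) _ (ae_of_all _ (hexp_norm · s)))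
  obtain ⟨h₀⟩ := nonempty_of_isProbabilityMeasure P
  have hM_pos : 0 < M :=
    (integral_exp_pos (.of_bound (by fun_prop) _ (ae_of_all _ (hexp_norm h₀)))).trans_le (hM h₀)
  have hbad : μ {s | M / δ ≤ F s} ≤ ENNReal.ofReal δ := by
    rw [← ofReal_measureReal]
    refine ENNReal.ofReal_le_ofReal (le_of_mul_le_mul_left ?_ (div_pos hM_pos hδ))
    rw [div_mul_cancel₀ _ hδ.ne']
    exact mul_measureReal_le_of_forall_integral_le P μ (by fun_prop) (fun _ => exp_nonneg _)
      (fun q => hexp_le q.1 q.2) hM _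
  have hgood : {s | M / δ ≤ F s}ᶜ ⊆ {s | ∀ Q : Measure H, IsProbabilityMeasure Q →
      klDiv Q P ≠ ⊤ → ∫ h, Φ h s ∂Q ≤ √(((klDiv Q P).toReal + log (M / δ)) / t)} := by
    intro s (hs : ¬M / δ ≤ F s) Q _ hKL
    calc ∫ h, Φ h s ∂Q ≤ √(((klDiv Q P).toReal + log (F s)) / t) :=
          integral_le_sqrt_toReal_klDiv_add_log_integral_exp_sq hKL
            (hΦ.comp measurable_prodMk_right) (hΦC · s) ht
      _ ≤ √(((klDiv Q P).toReal + log (M / δ)) / t) := by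
          gcongr
          exacts [hF_pos s, (not_le.1 hs).le]
  have hF_meas : Measurable F :=
    (Measurable.stronglyMeasurable (f := fun q : H × S => exp (t * Φ q.1 q.2 ^ 2))
      (by fun_prop)).integral_prod_left'.measurable
  calc ENNReal.ofReal (1 - δ) = 1 - ENNReal.ofReal δ := by
        rw [ENNReal.ofReal_sub _ hδ.le, ENNReal.ofReal_one]
    _ ≤ 1 - μ {s | M / δ ≤ F s} := tsub_le_tsub_left hbad _
    _ = μ {s | M / δ ≤ F s}ᶜ :=
        (prob_compl_eq_one_sub (measurableSet_le (by fun_prop) hF_meas)).symm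
    _ ≤ _ := measure_mono hgood

theorem pac_bayes_of_mem_Icc {A : H → ℝ} {B : H → S → ℝ} (hA : Measurable A)
    (hB : Measurable (Function.uncurry B)) (hA01 : ∀ h, A h ∈ Set.Icc 0 1)
    (hB01 : ∀ h s, B h s ∈ Set.Icc 0 1) {t : ℝ} (ht : 0 < t) {M : ℝ}
    (hM : ∀ h, ∫ s, exp (t * (A h - B h s) ^ 2) ∂μ ≤ M) {δ : ℝ} (hδ : 0 < δ) :
    ENNReal.ofReal (1 - δ) ≤ μ {s | ∀ Q : Measure H, IsProbabilityMeasure Q → klDiv Q P ≠ ⊤ →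
      ∫ h, A h ∂Q ≤ ∫ h, B h s ∂Q + √(((klDiv Q P).toReal + log (M / δ)) / t)} := by
  have hΦC (h : H) (s : S) : |A h - B h s| ≤ 1 :=
    abs_sub_le_of_nonneg_of_le (hA01 h).1 (hA01 h).2 (hB01 h s).1 (hB01 h s).2
  refine (pac_bayes_of_integral_exp_mul_sq_le P μ (Φ := fun h s => A h - B h s)
    (by fun_prop) hΦC ht hM hδ).trans (measure_mono fun s hs Q hQ hKL => ?_)
  have hsplit : ∫ h, A h - B h s ∂Q = ∫ h, A h ∂Q - ∫ h, B h s ∂Q :=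
    integral_sub (.of_mem_Icc 0 1 hA.aemeasurable (ae_of_all _ hA01))
      (.of_mem_Icc 0 1 (hB.comp measurable_prodMk_right).aemeasurable (ae_of_all _ (hB01 · s)))
  have := hs Q hQ hKL
  rw [hsplit] at this
  linarith

end PACBayes

lemma one_div_mul_sum_mem_Icc {n : ℕ} {x : Fin n → ℝ} (hx : ∀ i, x i ∈ Set.Icc 0 1) :
    1 / (n : ℝ) * ∑ i, x i ∈ Set.Icc 0 1 := by
  refine ⟨mul_nonneg (by positivity) (Finset.sum_nonneg fun i _ => (hx i).1), ?_⟩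
  calc 1 / (n : ℝ) * ∑ i, x i ≤ 1 / n * n := by
        gcongr
        simpa using Finset.sum_le_sum fun i (_ : i ∈ Finset.univ) => (hx i).2
    _ ≤ 1 := by
        rw [one_div_mul_eq_div]
        exact div_self_le_one _

/-- **McAllester PAC-Bayes bound.** For a prior `P` on a hypothesis space `H`, a 0-1 loss `ℓ`,
and a data distribution `𝒟`, for any `δ ∈ (0,1)` and `n ≥ 1`, with probability at least
`1 - δ` over an i.i.d. sample of size `n`, simultaneously for every posterior `Q`:
`E_{h∼Q}[R(h)] ≤ E_{h∼Q}[R̂(h)] + sqrt((KL(Q‖P) + log(n/δ) + 2) / (2n - 1))`. -/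
theorem mcallester_pac_bayes_bound
    {H Z : Type*} [MeasurableSpace H] [MeasurableSpace Z]
    (P : Measure H) [IsProbabilityMeasure P]
    (𝒟 : Measure Z) [IsProbabilityMeasure 𝒟]
    (ℓ : H → Z → ℝ) (hmeas : Measurable (Function.uncurry ℓ))
    (h01 : ∀ h z, ℓ h z = 0 ∨ ℓ h z = 1)
    (n : ℕ) (hn : 1 ≤ n) (δ : ℝ) (hδ : δ ∈ Set.Ioo (0 : ℝ) 1) :
    ENNReal.ofReal (1 - δ) ≤
      (Measure.pi fun _ : Fin n => 𝒟)
        {s : Fin n → Z | ∀ Q : Measure H, IsProbabilityMeasure Q → klDiv Q P ≠ ⊤ →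
          (∫ h, (∫ z, ℓ h z ∂𝒟) ∂Q) ≤
            (∫ h, (1 / n) * ∑ i : Fin n, ℓ h (s i) ∂Q) +
              Real.sqrt (((klDiv Q P).toReal + Real.log (n / δ) + 2) / (2 * n - 1))} := by
  have hn' : (1 : ℝ) ≤ n := by exact_mod_cast hn
  have hℓ01 (h : H) (z : Z) : ℓ h z ∈ Set.Icc 0 1 := by rcases h01 h z with e | e <;> simp [e]
  have hrisk01 (h : H) : ∫ z, ℓ h z ∂𝒟 ∈ Set.Icc 0 1 :=
    (convex_Icc 0 1).integral_mem isClosed_Icc (ae_of_all _ (hℓ01 h))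
      (.of_mem_Icc 0 1 (hmeas.comp measurable_prodMk_left).aemeasurable (ae_of_all _ (hℓ01 h)))
  have hM (h : H) : ∫ s, exp ((2 * n - 1) * ((∫ z, ℓ h z ∂𝒟) - 1 / n * ∑ i, ℓ h (s i)) ^ 2)
      ∂(Measure.pi fun _ : Fin n => 𝒟) ≤ exp 2 * n :=
    (integral_pi_exp_mul_sq_integral_sub_mean_le 𝒟 (hmeas.comp measurable_prodMk_left) (h01 h)
      n).trans (by nlinarith [add_one_le_exp 2])
  have hlog : log (exp 2 * n / δ) = log (n / δ) + 2 := by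
    rw [mul_div_assoc, log_mul (exp_ne_zero 2) (by have := hδ.1; positivity), log_exp, add_comm]
  have := pac_bayes_of_mem_Icc P (Measure.pi fun _ : Fin n => 𝒟) (A := fun h => ∫ z, ℓ h z ∂𝒟)
    hmeas.stronglyMeasurable.integral_prod_right'.measurable (by fun_prop) hrisk01
    (fun h s => one_div_mul_sum_mem_Icc fun i => hℓ01 h (s i)) (by linarith) hM hδ.1
  simpa only [hlog, ← add_assoc] using this
end

section
/- Kraft inequality converse (existence of prefix codes): Let I be a countable set and ℓ : I → ℕ a function satisfying Σ_{i ∈ I} 2^{−ℓ(i)} ≤ 1. Then there exists an injective map c from I into the set of finite binary strings such that the image of c is prefix-free and |c(i)| = ℓ(i) for every i ∈ I. -/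
/-!
Sort the index set so that `ℓ` is monotone and every index has finitely many predecessors
(there are finitely many `i` with `ℓ i ≤ L`, as each contributes at least `2 ^ (-L)` to the Kraft
sum). Give `i` the dyadic interval `[x i, x i + 2 ^ (-ℓ i))` with `x i = ∑_{j < i} 2 ^ (-ℓ j)`.
These intervals are disjoint subintervals of `[0, 1)`, and by monotonicity `x i` is a multiple of
`2 ^ (-ℓ i)`, so the interval consists of the reals whose binary expansion starts with the
`ℓ i`-bit word of `2 ^ ℓ i * x i`. Words of disjoint dyadic intervals are not prefixes of one
another.
-/

open scoped ENNReal

/-- A set of finite binary strings is prefix-free if no element is a proper prefix of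
another element. -/
def PrefixFree (S : Set (List Bool)) : Prop :=
  ∀ s ∈ S, ∀ t ∈ S, s <+: t → s = t

open Finset

def bitWord : ℕ → ℕ → List Bool
  | 0, _ => []
  | L + 1, n => n.testBit L :: bitWord L n

@[simp]
theorem length_bitWord (L n : ℕ) : (bitWord L n).length = L := by
  induction L with
  | zero => rfl
  | succ L ih => simp [bitWord, ih]

theorem testBit_eq_of_bitWord_eq {L n m : ℕ} (h : bitWord L n = bitWord L m) {k : ℕ}
    (hk : k < L) : n.testBit k = m.testBit k := by
  induction L with
  | zero => omega
  | succ L ih =>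
    simp only [bitWord, List.cons.injEq] at h
    rcases Nat.lt_succ_iff_lt_or_eq.mp hk with hk | rfl
    · exact ih h.2 hk
    · exact h.1

theorem bitWord_injOn (L : ℕ) : Set.InjOn (bitWord L) (Set.Iio (2 ^ L)) := by
  intro n hn m hm h
  refine Nat.eq_of_testBit_eq fun k => ?_
  by_cases hk : k < L
  · exact testBit_eq_of_bitWord_eq h hk
  · have hL : 2 ^ L ≤ 2 ^ k := Nat.pow_le_pow_right two_pos (by omega)
    rw [Nat.testBit_eq_false_of_lt (lt_of_lt_of_le hn hL),
      Nat.testBit_eq_false_of_lt (lt_of_lt_of_le hm hL)]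

theorem take_bitWord {L M : ℕ} (h : L ≤ M) (m : ℕ) :
    (bitWord M m).take L = bitWord L (m / 2 ^ (M - L)) := by
  induction M generalizing L with
  | zero =>
    obtain rfl := Nat.le_zero.mp h
    rfl
  | succ M ih =>
    cases L with
    | zero => rfl
    | succ L =>
      rw [bitWord, List.take_succ_cons, ih (by omega), bitWord, Nat.add_sub_add_right,
        ← Nat.shiftRight_eq_div_pow, Nat.testBit_shiftRight]
      congr 2
      omega

theorem eq_div_of_bitWord_prefix {L M n m : ℕ} (hn : n < 2 ^ L) (hm : m < 2 ^ M)
    (h : bitWord L n <+: bitWord M m) : L ≤ M ∧ n = m / 2 ^ (M - L) := by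
  have hLM : L ≤ M := by simpa using h.length_le
  refine ⟨hLM, bitWord_injOn L hn ?_ ?_⟩
  · rw [Set.mem_Iio, Nat.div_lt_iff_lt_mul (by positivity), ← pow_add]
    exact hm.trans_le (Nat.pow_le_pow_right two_pos (by omega))
  · rw [← take_bitWord hLM, List.prefix_iff_eq_take.mp h, length_bitWord]

theorem natCast_two_pow_sub {a b : ℕ} (h : a ≤ b) :
    ((2 ^ (b - a) : ℕ) : ℝ≥0∞) = 2 ^ b * 2 ^ (-(a : ℤ)) := by
  rw [Nat.cast_pow, Nat.cast_ofNat, ← zpow_natCast, ← zpow_natCast,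
    ← ENNReal.zpow_add two_ne_zero ENNReal.ofNat_ne_top]
  congr 1
  omega

theorem sum_two_pow_sub_le_of_sum_le_one {ι : Type*} {s : Finset ι} {ℓ : ι → ℕ} {L : ℕ}
    (hL : ∀ j ∈ s, ℓ j ≤ L) (hs : ∑ j ∈ s, (2 : ℝ≥0∞) ^ (-(ℓ j : ℤ)) ≤ 1) :
    ∑ j ∈ s, 2 ^ (L - ℓ j) ≤ 2 ^ L := by
  have : ((∑ j ∈ s, 2 ^ (L - ℓ j) : ℕ) : ℝ≥0∞) ≤ ((2 ^ L : ℕ) : ℝ≥0∞) :=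
    calc ((∑ j ∈ s, 2 ^ (L - ℓ j) : ℕ) : ℝ≥0∞)
      _ = 2 ^ L * ∑ j ∈ s, (2 : ℝ≥0∞) ^ (-(ℓ j : ℤ)) := by
        rw [Nat.cast_sum, mul_sum]
        exact sum_congr rfl fun j hj => natCast_two_pow_sub (hL j hj)
      _ ≤ 2 ^ L * 1 := by gcongr
      _ = ((2 ^ L : ℕ) : ℝ≥0∞) := by simp
  exact_mod_cast this

theorem finite_setOf_le_of_kraft {ι : Type*} {ℓ : ι → ℕ}
    (hkraft : ∑' i, (2 : ℝ≥0∞) ^ (-(ℓ i : ℤ)) ≤ 1) (L : ℕ) : {i | ℓ i ≤ L}.Finite := by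
  have hε : (2 : ℝ≥0∞) ^ (-(L : ℤ)) ≠ 0 := (ENNReal.zpow_pos two_ne_zero ENNReal.ofNat_ne_top _).ne'
  refine (ENNReal.finite_const_le_of_tsum_ne_top (hkraft.trans_lt ENNReal.one_lt_top).ne hε).subset
    fun i hi => ?_
  exact ENNReal.zpow_le_of_le one_le_two (neg_le_neg (by exact_mod_cast hi))

section LinearOrder

variable {I : Type*} [LinearOrder I] [LocallyFiniteOrderBot I]

/-- For monotone `ℓ`, this is `2 ^ ℓ i * ∑_{j < i} 2 ^ (-ℓ j)`: the left end of the dyadic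
interval of `i` in units of its length (otherwise truncated subtraction makes it junk). -/
def kraftPosition (ℓ : I → ℕ) (i : I) : ℕ :=
  ∑ j ∈ Iio i, 2 ^ (ℓ i - ℓ j)

variable {ℓ : I → ℕ}

theorem kraftPosition_add_one (i : I) :
    kraftPosition ℓ i + 1 = ∑ j ∈ Iic i, 2 ^ (ℓ i - ℓ j) := by
  rw [Iic_eq_cons_Iio, sum_cons, Nat.sub_self, pow_zero, add_comm, kraftPosition]

theorem kraftPosition_lt_two_pow (hℓ : Monotone ℓ)
    (hkraft : ∑' i, (2 : ℝ≥0∞) ^ (-(ℓ i : ℤ)) ≤ 1) (i : I) : kraftPosition ℓ i < 2 ^ ℓ i := by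
  rw [← Nat.add_one_le_iff, kraftPosition_add_one]
  exact sum_two_pow_sub_le_of_sum_le_one (fun j hj => hℓ (mem_Iic.mp hj))
    ((ENNReal.sum_le_tsum _).trans hkraft)

theorem kraftPosition_add_one_mul_le (hℓ : Monotone ℓ) {i j : I} (hij : i < j) :
    (kraftPosition ℓ i + 1) * 2 ^ (ℓ j - ℓ i) ≤ kraftPosition ℓ j := by
  rw [kraftPosition_add_one, sum_mul]
  calc ∑ k ∈ Iic i, 2 ^ (ℓ i - ℓ k) * 2 ^ (ℓ j - ℓ i) = ∑ k ∈ Iic i, 2 ^ (ℓ j - ℓ k) := by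
        refine sum_congr rfl fun k hk => ?_
        have hki := hℓ (mem_Iic.mp hk)
        have hij' := hℓ hij.le
        rw [← pow_add]
        congr 1
        omega
    _ ≤ kraftPosition ℓ j :=
        sum_le_sum_of_subset fun k hk => mem_Iio.mpr ((mem_Iic.mp hk).trans_lt hij)

theorem eq_of_bitWord_kraftPosition_prefix (hℓ : Monotone ℓ)
    (hkraft : ∑' i, (2 : ℝ≥0∞) ^ (-(ℓ i : ℤ)) ≤ 1) {i j : I}
    (h : bitWord (ℓ i) (kraftPosition ℓ i) <+: bitWord (ℓ j) (kraftPosition ℓ j)) : i = j := by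
  obtain ⟨hle, hdiv⟩ := eq_div_of_bitWord_prefix (kraftPosition_lt_two_pow hℓ hkraft i)
    (kraftPosition_lt_two_pow hℓ hkraft j) h
  rcases lt_trichotomy i j with hij | rfl | hji
  · have := (Nat.le_div_iff_mul_le (by positivity)).mpr (kraftPosition_add_one_mul_le hℓ hij)
    omega
  · rfl
  · have hℓ_eq : ℓ j = ℓ i := le_antisymm (hℓ hji.le) hle
    have := kraftPosition_add_one_mul_le hℓ hji
    rw [hℓ_eq, Nat.sub_self, pow_zero, Nat.div_one] at hdiv
    rw [hℓ_eq, Nat.sub_self, pow_zero, mul_one] at this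
    omega

theorem exists_prefixFree_code_of_monotone (hℓ : Monotone ℓ)
    (hkraft : ∑' i, (2 : ℝ≥0∞) ^ (-(ℓ i : ℤ)) ≤ 1) :
    ∃ c : I → List Bool, Function.Injective c ∧ PrefixFree (Set.range c) ∧
      ∀ i, (c i).length = ℓ i := by
  have hcode := fun i j => eq_of_bitWord_kraftPosition_prefix hℓ hkraft (i := i) (j := j)
  refine ⟨fun i => bitWord (ℓ i) (kraftPosition ℓ i),
    fun i j h => hcode i j (by simp only at h; rw [h]), ?_, fun i => length_bitWord _ _⟩
  rintro _ ⟨i, rfl⟩ _ ⟨j, rfl⟩ h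
  rw [hcode i j h]

end LinearOrder

theorem kraft_inequality_converse_general
    {I : Type*} (ℓ : I → ℕ)
    (hkraft : ∑' i : I, (2 : ℝ≥0∞) ^ (-(ℓ i : ℤ)) ≤ 1) :
    ∃ c : I → List Bool, Function.Injective c ∧ PrefixFree (Set.range c) ∧
      ∀ i, (c i).length = ℓ i := by
  let _ : LinearOrder I := LinearOrder.lift' (fun i => toLex (ℓ i, embeddingToCardinal i))
    fun i j h => embeddingToCardinal.injective (congrArg Prod.snd (toLex.injective h))
  have hℓ : Monotone ℓ := fun i j hij => Prod.Lex.monotone_fst _ _ hij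
  let _ : LocallyFiniteOrderBot I := LocallyFiniteOrderBot.ofIic I
    (fun i => ((finite_setOf_le_of_kraft hkraft (ℓ i)).subset
      (t := Set.Iic i) fun j hj => hℓ hj).toFinset) fun i j => Set.Finite.mem_toFinset _
  exact exists_prefixFree_code_of_monotone hℓ hkraft

/-- **Kraft inequality converse (existence of prefix codes).** If `I` is a countable set and
`ℓ : I → ℕ` satisfies `Σ_{i ∈ I} 2^{-ℓ i} ≤ 1`, then there is an injective map `c` from `I`
into finite binary strings whose image is prefix-free and with `|c i| = ℓ i` for all `i`. -/
theorem kraft_inequality_converse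
    {I : Type*} [Countable I] (ℓ : I → ℕ)
    (hkraft : ∑' i : I, (2 : ℝ≥0∞) ^ (-(ℓ i : ℤ)) ≤ 1) :
    ∃ c : I → List Bool, Function.Injective c ∧ PrefixFree (Set.range c) ∧
      ∀ i, (c i).length = ℓ i :=
  kraft_inequality_converse_general ℓ hkraft
end
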